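/- Let R be a term rewrite system such that |MSDC(r)| = 1 for every rule ℓ → r ∈ R, and let t0 be a basic term for R. Then in every rewrite sequence t0 ⇉ t1 ⇉ t2 ⇉ …, each term ti contains at most one innermost redex. -/

import Mathlib

namespace ParallelComplexity

/-! ## First-order terms -/

inductive Term (σ : Type) (V : Type) : Type where
  | var : V → Term σ V
  | fn : σ → List (Term σ V) → Term σ V

variable {σ V : Type}

mutual
  /-- Application of a substitution to a term. -/
  def Term.subst (θ : V → Term σ V) : Term σ V → Term σ V
    | Term.var x => θ x
    | Term.fn f ts => Term.fn f (Term.substList θ ts)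
  def Term.substList (θ : V → Term σ V) : List (Term σ V) → List (Term σ V)
    | [] => []
    | t :: ts => Term.subst θ t :: Term.substList θ ts
end

mutual
  /-- The size |t| of a term. -/
  def Term.size : Term σ V → ℕ
    | Term.var _ => 1
    | Term.fn _ ts => 1 + Term.sizeList ts
  def Term.sizeList : List (Term σ V) → ℕ
    | [] => 0
    | t :: ts => Term.size t + Term.sizeList ts
end

/-- Subterm `t|π` at a position (positions are lists of argument indices);
`none` if the position is not a position of `t`. -/
def Term.subtermAt : Term σ V → List ℕ → Option (Term σ V)
  | t, [] => some t
  | Term.var _, _ :: _ => none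
  | Term.fn _ ts, i :: π =>
    match ts[i]? with
    | none => none
    | some u => Term.subtermAt u π

/-- `t[s]π`: replacement of the subterm at position `π` by `s`. -/
def Term.replaceAt : Term σ V → List ℕ → Term σ V → Option (Term σ V)
  | _, [], s => some s
  | Term.var _, _ :: _, _ => none
  | Term.fn f ts, i :: π, s =>
    match ts[i]? with
    | none => none
    | some u =>
      match Term.replaceAt u π s with
      | none => none
      | some u' => some (Term.fn f (ts.set i u'))

def Term.isVar (t : Term σ V) : Prop := ∃ x, t = Term.var x

/-- `x` occurs as a variable in the term. -/
inductive Term.VarIn (x : V) : Term σ V → Prop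
  | var : Term.VarIn x (Term.var x)
  | fn {f : σ} {ts : List (Term σ V)} {t : Term σ V} :
      t ∈ ts → Term.VarIn x t → Term.VarIn x (Term.fn f ts)

/-! ## Term rewrite systems -/

structure Rule (σ V : Type) where
  lhs : Term σ V
  rhs : Term σ V

/-- A well-formed TRS: a finite set of rules `ℓ → r` with `ℓ ∉ V` and
`Var(r) ⊆ Var(ℓ)`. -/
def IsWfTRS (R : Set (Rule σ V)) : Prop :=
  R.Finite ∧ (∀ r ∈ R, ¬ r.lhs.isVar) ∧
    ∀ r ∈ R, ∀ x : V, Term.VarIn x r.rhs → Term.VarIn x r.lhs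

def IsRedex (R : Set (Rule σ V)) (t : Term σ V) : Prop :=
  ∃ r ∈ R, ∃ θ : V → Term σ V, t = Term.subst θ r.lhs

/-- An innermost redex: a redex none of whose proper subterms is a redex. -/
def IsInnermostRedex (R : Set (Rule σ V)) (t : Term σ V) : Prop :=
  IsRedex R t ∧
    ∀ π : List ℕ, π ≠ [] → ∀ u, t.subtermAt π = some u → ¬ IsRedex R u

/-- One rewrite step at position `π`. -/
def RewriteAt (R : Set (Rule σ V)) (π : List ℕ) (s t : Term σ V) : Prop :=
  ∃ r ∈ R, ∃ θ : V → Term σ V,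
    s.subtermAt π = some (Term.subst θ r.lhs) ∧
    s.replaceAt π (Term.subst θ r.rhs) = some t

/-- The rewrite relation `s →_R t`. -/
def Rewrite (R : Set (Rule σ V)) (s t : Term σ V) : Prop := ∃ π, RewriteAt R π s t

/-- The innermost rewrite relation `s →i t`. -/
def InnermostRewrite (R : Set (Rule σ V)) (s t : Term σ V) : Prop :=
  ∃ π, ∃ r ∈ R, ∃ θ : V → Term σ V,
    s.subtermAt π = some (Term.subst θ r.lhs) ∧
    IsInnermostRedex R (Term.subst θ r.lhs) ∧
    s.replaceAt π (Term.subst θ r.rhs) = some t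

def NormalForm (R : Set (Rule σ V)) (t : Term σ V) : Prop := ¬ ∃ u, Rewrite R t u

/-- Parallel-innermost rewriting `s ⇉ t`: `s →i⁺ t` and either
(a) `s` is an innermost redex and `s →i t`, or (b) `s = f(s₁,…,sₙ)`,
`t = f(t₁,…,tₙ)` and each `sₖ ⇉ tₖ` or `sₖ = tₖ` is a normal form. -/
inductive ParInnermost (R : Set (Rule σ V)) : Term σ V → Term σ V → Prop
  | redex {s t : Term σ V} :
      Relation.TransGen (InnermostRewrite R) s t →
      IsInnermostRedex R s → InnermostRewrite R s t → ParInnermost R s t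
  | congr (f : σ) (ss ts : List (Term σ V)) :
      Relation.TransGen (InnermostRewrite R) (Term.fn f ss) (Term.fn f ts) →
      ss.length = ts.length →
      -- each `sₖ ⇉ tₖ`, or `sₖ = tₖ` is a normal form (stated as the
      -- classically equivalent implication to satisfy the kernel's
      -- restrictions on nested inductive occurrences)
      (∀ p ∈ ss.zip ts, ¬ (p.1 = p.2 ∧ NormalForm R p.1) → ParInnermost R p.1 p.2) →
      ParInnermost R (Term.fn f ss) (Term.fn f ts)

/-! ## Abstract properties of relations -/

def Confluent {α : Type} (r : α → α → Prop) : Prop :=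
  ∀ s t u, Relation.ReflTransGen r s t → Relation.ReflTransGen r s u →
    ∃ v, Relation.ReflTransGen r t v ∧ Relation.ReflTransGen r u v

def Deterministic {α : Type} (r : α → α → Prop) : Prop :=
  ∀ s t u, r s t → r s u → t = u

def UniformlyConfluent {α : Type} (r : α → α → Prop) : Prop :=
  ∀ s t u, r s t → r s u → t = u ∨ ∃ v, r t v ∧ r u v

/-! ## Derivation height and runtime complexity -/

/-- `e`-th iterate of a relation. -/
def iterRel {α : Type} (r : α → α → Prop) : ℕ → α → α → Prop
  | 0 => fun a b => a = b
  | n + 1 => fun a c => ∃ b, r a b ∧ iterRel r n b c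

/-- Derivation height `Dh(t, →) = sup { e | ∃ t'. t →^e t' } ∈ ℕ ∪ {ω}`. -/
noncomputable def Dh {α : Type} (r : α → α → Prop) (t : α) : ℕ∞ :=
  sSup { e : ℕ∞ | ∃ n : ℕ, e = (n : ℕ∞) ∧ ∃ t', iterRel r n t t' }

/-- Defined symbols: root symbols of left-hand sides. -/
def Defined (R : Set (Rule σ V)) (f : σ) : Prop :=
  ∃ r ∈ R, ∃ ts : List (Term σ V), r.lhs = Term.fn f ts

def HasDefinedRoot (R : Set (Rule σ V)) (t : Term σ V) : Prop :=
  ∃ f ts, t = Term.fn f ts ∧ Defined R f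

/-- Constructor terms: terms over constructor symbols and variables. -/
inductive ConsTerm (R : Set (Rule σ V)) : Term σ V → Prop
  | var (x : V) : ConsTerm R (Term.var x)
  | fn (f : σ) (ts : List (Term σ V)) :
      ¬ Defined R f → (∀ t ∈ ts, ConsTerm R t) → ConsTerm R (Term.fn f ts)

/-- Basic terms: a defined symbol applied to constructor terms. -/
def BasicTerm (R : Set (Rule σ V)) (t : Term σ V) : Prop :=
  ∃ f ts, t = Term.fn f ts ∧ Defined R f ∧ ∀ u ∈ ts, ConsTerm R u

/-- Innermost runtime complexity. -/
noncomputable def irc (R : Set (Rule σ V)) (n : ℕ) : ℕ∞ :=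
  sSup { d : ℕ∞ | ∃ t, BasicTerm R t ∧ t.size ≤ n ∧ d = Dh (InnermostRewrite R) t }

/-- Parallel-innermost runtime complexity. -/
noncomputable def pirc (R : Set (Rule σ V)) (n : ℕ) : ℕ∞ :=
  sSup { d : ℕ∞ | ∃ t, BasicTerm R t ∧ t.size ≤ n ∧ d = Dh (ParInnermost R) t }

/-! ## Critical pairs -/

def RuleVars (r : Rule σ V) : Set V :=
  { x | Term.VarIn x r.lhs ∨ Term.VarIn x r.rhs }

/-- `r₂` is a variant of `r₁` (each is a substitution instance of the other). -/
def IsVariantOf (r₁ r₂ : Rule σ V) : Prop :=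
  ∃ θ₁ θ₂ : V → Term σ V,
    r₂.lhs = Term.subst θ₁ r₁.lhs ∧ r₂.rhs = Term.subst θ₁ r₁.rhs ∧
    r₁.lhs = Term.subst θ₂ r₂.lhs ∧ r₁.rhs = Term.subst θ₂ r₂.rhs

def Unifies (θ : V → Term σ V) (s t : Term σ V) : Prop :=
  Term.subst θ s = Term.subst θ t

def IsMGU (μ : V → Term σ V) (s t : Term σ V) : Prop :=
  Unifies μ s t ∧
    ∀ δ : V → Term σ V, Unifies δ s t →
      ∃ δ' : V → Term σ V, ∀ x : V, Term.subst δ' (μ x) = δ x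

/-- Critical pairs `⟨uσ[rσ]π, vσ⟩` of a TRS, from variable-renamed copies
`ℓ → r` and `u → v` of rules of `R` overlapping at a non-variable position
`π` of `u` (not a root overlap of variants of the same rule). -/
def CriticalPair (R : Set (Rule σ V)) (cp : Term σ V × Term σ V) : Prop :=
  ∃ r₁ r₂ r₁' r₂' : Rule σ V, r₁' ∈ R ∧ r₂' ∈ R ∧
    IsVariantOf r₁' r₁ ∧ IsVariantOf r₂' r₂ ∧
    (∀ x : V, x ∈ RuleVars r₁ → x ∉ RuleVars r₂) ∧
    ∃ (π : List ℕ) (u' : Term σ V),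
      r₂.lhs.subtermAt π = some u' ∧ ¬ u'.isVar ∧
      (π = [] → ¬ IsVariantOf r₁ r₂) ∧
      ∃ μ : V → Term σ V, IsMGU μ r₁.lhs u' ∧
        ∃ w : Term σ V,
          (Term.subst μ r₂.lhs).replaceAt π (Term.subst μ r₁.rhs) = some w ∧
          cp = (w, Term.subst μ r₂.rhs)

/-- `R` is non-overlapping iff it has no critical pairs. -/
def NonOverlapping (R : Set (Rule σ V)) : Prop := ∀ cp, ¬ CriticalPair R cp

/-- An innermost critical overlay: a critical pair at the root position whose
critical peak consists of two innermost rewrite steps. -/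
def InnermostCriticalOverlay (R : Set (Rule σ V)) (cp : Term σ V × Term σ V) : Prop :=
  ∃ r₁ r₂ r₁' r₂' : Rule σ V, r₁' ∈ R ∧ r₂' ∈ R ∧
    IsVariantOf r₁' r₁ ∧ IsVariantOf r₂' r₂ ∧
    (∀ x : V, x ∈ RuleVars r₁ → x ∉ RuleVars r₂) ∧
    ¬ IsVariantOf r₁ r₂ ∧
    ∃ μ : V → Term σ V, IsMGU μ r₁.lhs r₂.lhs ∧
      IsInnermostRedex R (Term.subst μ r₂.lhs) ∧
      cp = (Term.subst μ r₁.rhs, Term.subst μ r₂.rhs)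

/-! ## Positions with defined symbols and structural dependency chains -/

/-- Strict prefix order on positions: `PosGT τ π` iff `τ > π`,
i.e. `∃ π' ≠ ε, π π' = τ`. -/
def PosGT (τ π : List ℕ) : Prop := ∃ π' : List ℕ, π' ≠ [] ∧ π ++ π' = τ

/-- `PosD(t)`: positions of `t` with defined root symbol. -/
def PosD (R : Set (Rule σ V)) (t : Term σ V) : Set (List ℕ) :=
  { π | ∃ u, t.subtermAt π = some u ∧ HasDefinedRoot R u }

/-- Structural dependency chain `⟨π₁,…,πₖ⟩` for `t`: positions in `PosD(t)`
with `π₁ > … > πₖ`. -/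
def SDChain (R : Set (Rule σ V)) (t : Term σ V) (c : List (List ℕ)) : Prop :=
  (∀ π ∈ c, π ∈ PosD R t) ∧ c.Chain' PosGT

/-- Maximal structural dependency chains: `MSDC R t c` iff `c` is a maximal
structural dependency chain for `t`. -/
def MSDC (R : Set (Rule σ V)) (t : Term σ V) (c : List (List ℕ)) : Prop :=
  SDChain R t c ∧
    ((c = [] ∧ PosD R t = ∅) ∨
      ∃ (π₁ : List ℕ) (rest : List (List ℕ)), c = π₁ :: rest ∧
        ∀ π ∈ PosD R t, ¬ PosGT π π₁ ∧ (PosGT π₁ π → π ∈ rest))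

/-! ## Sharp terms, dependency tuples -/

/-- Extended signature: base symbols, sharp symbols `f#`, compound symbols `Com_n`. -/
inductive SharpSym (σ : Type) : Type where
  | base : σ → SharpSym σ
  | sharp : σ → SharpSym σ
  | com : ℕ → SharpSym σ

mutual
  def Term.embed : Term σ V → Term (SharpSym σ) V
    | Term.var x => Term.var x
    | Term.fn f ts => Term.fn (SharpSym.base f) (Term.embedList ts)
  def Term.embedList : List (Term σ V) → List (Term (SharpSym σ) V)
    | [] => []
    | t :: ts => Term.embed t :: Term.embedList ts
end

open Classical in
/-- `t#`: mark the root of `t` with its sharp symbol (if defined). -/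
noncomputable def Term.sharp (R : Set (Rule σ V)) : Term σ V → Term (SharpSym σ) V
  | Term.var x => Term.var x
  | Term.fn f ts =>
    if Defined R f then Term.fn (SharpSym.sharp f) (Term.embedList ts)
    else Term.fn (SharpSym.base f) (Term.embedList ts)

open Classical in
/-- Sharping on terms over the extended signature: for `t = f(…)` with `f` a
defined (base) symbol of `R`, mark the root; otherwise `t# = t`. -/
noncomputable def sharpC (R : Set (Rule σ V)) : Term (SharpSym σ) V → Term (SharpSym σ) V
  | Term.fn (SharpSym.base f) ts =>
    if Defined R f then Term.fn (SharpSym.sharp f) ts else Term.fn (SharpSym.base f) ts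
  | t => t

def liftRule (r : Rule σ V) : Rule (SharpSym σ) V :=
  { lhs := r.lhs.embed, rhs := r.rhs.embed }

def liftRules (R : Set (Rule σ V)) : Set (Rule (SharpSym σ) V) := liftRule '' R

/-- The dependency tuple `ℓ# → Com_k(u₁#,…,uₖ#)` built from subterms `u₁,…,uₖ`
of the right-hand side. -/
noncomputable def mkDT (R : Set (Rule σ V)) (ρ : Rule σ V) (us : List (Term σ V)) :
    Rule (SharpSym σ) V :=
  { lhs := Term.sharp R ρ.lhs,
    rhs := Term.fn (SharpSym.com us.length) (us.map (Term.sharp R)) }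

/-- `DTpar(ℓ → r)`: one dependency tuple per maximal structural dependency chain. -/
def DTparRule (R : Set (Rule σ V)) (ρ : Rule σ V) : Set (Rule (SharpSym σ) V) :=
  { d | ∃ (c : List (List ℕ)) (us : List (Term σ V)),
      MSDC R ρ.rhs c ∧
      List.Forall₂ (fun π u => ρ.rhs.subtermAt π = some u) c us ∧
      d = mkDT R ρ us }

/-- `DTpar(R)`. -/
def DTparSet (R : Set (Rule σ V)) : Set (Rule (SharpSym σ) V) :=
  ⋃ ρ ∈ R, DTparRule R ρ

/-! ## Chain trees and Cplx -/

/-- A (possibly infinite, finitely branching) tree whose nodes (addressed by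
paths) are labelled with a dependency tuple and a substitution; the child at
direction `i` corresponds to argument `i` of the `Com` symbol. -/
structure ChainTree (σ V : Type) where
  label : List ℕ → Option (Rule (SharpSym σ) V × (V → Term (SharpSym σ) V))

/-- `T` is a `(D,R)`-chain tree for the sharp term `t`. -/
def IsChainTree (D R : Set (Rule (SharpSym σ) V)) (T : ChainTree σ V)
    (t : Term (SharpSym σ) V) : Prop :=
  (∃ r ν, T.label [] = some (r, ν) ∧ Term.subst ν r.lhs = t) ∧
  (∀ (p : List ℕ) (i : ℕ), T.label (p ++ [i]) ≠ none → T.label p ≠ none) ∧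
  (∀ (p : List ℕ) (r : Rule (SharpSym σ) V) (ν : V → Term (SharpSym σ) V),
    T.label p = some (r, ν) →
      r ∈ D ∧ NormalForm R (Term.subst ν r.lhs) ∧
      ∀ (i : ℕ) (r' : Rule (SharpSym σ) V) (δ : V → Term (SharpSym σ) V),
        T.label (p ++ [i]) = some (r', δ) →
          ∃ (m : ℕ) (vs : List (Term (SharpSym σ) V)),
            r.rhs = Term.fn (SharpSym.com m) vs ∧
            ∃ v, vs[i]? = some v ∧
              Relation.ReflTransGen (InnermostRewrite R)
                (Term.subst ν v) (Term.subst δ r'.lhs))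

/-- `|T|_S`: the number of nodes of `T` labelled with a DT from `S`. -/
noncomputable def treeCount (T : ChainTree σ V) (S : Set (Rule (SharpSym σ) V)) : ℕ∞ :=
  Set.encard { p : List ℕ | ∃ r ν, T.label p = some (r, ν) ∧ r ∈ S }

/-- `Cplx⟨D,S,R⟩(t)`: the supremum of `|T|_S` over all `(D,R)`-chain trees `T`
for `t` (`0` if there is no chain tree). -/
noncomputable def Cplx (D S R : Set (Rule (SharpSym σ) V))
    (t : Term (SharpSym σ) V) : ℕ∞ :=
  sSup { c : ℕ∞ | ∃ T : ChainTree σ V, IsChainTree D R T t ∧ c = treeCount T S }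

/-- `irc⟨D,S,R⟩(n)`: runtime complexity of a DT problem. -/
noncomputable def ircDTP (D S : Set (Rule (SharpSym σ) V)) (R : Set (Rule σ V))
    (n : ℕ) : ℕ∞ :=
  sSup { c : ℕ∞ | ∃ t : Term σ V, BasicTerm R t ∧ t.size ≤ n ∧
    c = Cplx D S (liftRules R) (Term.sharp R t) }

/-! ## Relative rewriting -/

/-- An innermost rewrite step using a rule from `X`, with innermost-ness
relative to the whole system `W`. -/
def InnermostRewriteSub (W X : Set (Rule σ V)) (s t : Term σ V) : Prop :=
  ∃ π, ∃ r ∈ X, ∃ θ : V → Term σ V,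
    s.subtermAt π = some (Term.subst θ r.lhs) ∧
    IsInnermostRedex W (Term.subst θ r.lhs) ∧
    s.replaceAt π (Term.subst θ r.rhs) = some t

/-- Innermost relative rewriting `→i_{A/B}`:
`s →B* s' →A s'' →B* t`, all steps innermost wrt `A ∪ B`. -/
def RelInnermost (A B : Set (Rule σ V)) (s t : Term σ V) : Prop :=
  ∃ s' s'' : Term σ V,
    Relation.ReflTransGen (InnermostRewriteSub (A ∪ B) B) s s' ∧
    InnermostRewriteSub (A ∪ B) A s' s'' ∧
    Relation.ReflTransGen (InnermostRewriteSub (A ∪ B) B) s'' t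

/-- Innermost runtime complexity of a relative TRS `A/B`. -/
noncomputable def ircRel (A B : Set (Rule σ V)) (n : ℕ) : ℕ∞ :=
  sSup { d : ℕ∞ | ∃ t : Term σ V, BasicTerm (A ∪ B) t ∧ t.size ≤ n ∧
    d = Dh (RelInnermost A B) t }

/-! ## Dependency tuples (abstract DT problems) -/

inductive IsBaseTerm : Term (SharpSym σ) V → Prop
  | var (x : V) : IsBaseTerm (Term.var x)
  | fn (f : σ) (ts : List (Term (SharpSym σ) V)) :
      (∀ t ∈ ts, IsBaseTerm t) → IsBaseTerm (Term.fn (SharpSym.base f) ts)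

def IsSharpTerm (t : Term (SharpSym σ) V) : Prop :=
  ∃ (f : σ) (args : List (Term (SharpSym σ) V)),
    t = Term.fn (SharpSym.sharp f) args ∧ ∀ a ∈ args, IsBaseTerm a

/-- A dependency tuple: a rule `s# → Com_n(t₁#,…,tₙ#)`. -/
def IsDT (r : Rule (SharpSym σ) V) : Prop :=
  IsSharpTerm r.lhs ∧
    ∃ (n : ℕ) (ts : List (Term (SharpSym σ) V)),
      r.rhs = Term.fn (SharpSym.com n) ts ∧ ts.length = n ∧ ∀ t ∈ ts, IsSharpTerm t

/-! ## Argument normal forms -/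

/-- Argument normal form: a variable, or a term all of whose direct arguments
are normal forms. -/
def ArgNF (R : Set (Rule σ V)) (t : Term σ V) : Prop :=
  (∃ x, t = Term.var x) ∨ ∃ f ts, t = Term.fn f ts ∧ ∀ u ∈ ts, NormalForm R u

/-- A parallel-innermost step all of whose rewrites are at positions strictly
below the root. -/
def ParInnermostBelow (R : Set (Rule σ V)) (s t : Term σ V) : Prop :=
  ParInnermost R s t ∧ ¬ IsInnermostRedex R s

/-- `b` is a maximal parallel argument normal form of `u`. -/
noncomputable def MaxANF (R : Set (Rule σ V)) (u b : Term σ V) : Prop :=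
  ArgNF R b ∧ Relation.ReflTransGen (ParInnermostBelow R) u b ∧
    ∀ u', ArgNF R u' → Relation.ReflTransGen (ParInnermostBelow R) u u' →
      Dh (ParInnermost R) u' ≤ Dh (ParInnermost R) b

/-! ## Many-sorted type assignments -/

/-- Well-typedness of a term wrt a sort set `St`, a type assignment `arty`
(argument sorts and result sort for each symbol) and variable typing `vty`. -/
inductive WellTyped {τ : Type} (St : Type) (arty : τ → List St × St) (vty : V → St) :
    Term τ V → St → Prop
  | var (x : V) : WellTyped St arty vty (Term.var x) (vty x)
  | fn (f : τ) (ts : List (Term τ V)) :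
      ts.length = (arty f).1.length →
      (∀ p ∈ ts.zip (arty f).1, WellTyped St arty vty p.1 p.2) →
      WellTyped St arty vty (Term.fn f ts) (arty f).2

/-- A strict total order on positions extending the strict prefix order. -/
def TotalExtOfPrefix (gt' : List ℕ → List ℕ → Prop) : Prop :=
  (∀ π τ, PosGT π τ → gt' π τ) ∧
  (∀ π τ ρ, gt' π τ → gt' τ ρ → gt' π ρ) ∧
  (∀ π τ, gt' π τ → ¬ gt' τ π) ∧
  (∀ π τ, π ≠ τ → gt' π τ ∨ gt' τ π)



/-!
The redex positions of every term of the sequence form a chain for the prefix order, so two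
innermost redexes coincide. A basic term has its only redex at the root. An innermost step
`ℓθ → rθ` at `π` keeps the chain property: a redex of the result lies above `π` or at `π τ` for a
defined position `τ` of `r`, since the instances of the variables of the innermost redex `ℓθ` are
normal forms and old redexes incomparable with `π` would contradict the chain property. Finally
`|MSDC(r)| = 1` puts all defined positions of `r` on one branch: each of them lies above a deepest
one, which heads a maximal chain.
-/

namespace Term

theorem substList_eq_map (θ : V → Term σ V) (ts : List (Term σ V)) :
    substList θ ts = ts.map (subst θ) := by
  induction ts with
  | nil => rfl
  | cons t ts ih => simp [substList, ih]

@[simp]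
theorem subtermAt_nil (t : Term σ V) : t.subtermAt [] = some t := by
  cases t <;> rfl

@[simp]
theorem subtermAt_var_cons (x : V) (i : ℕ) (π : List ℕ) :
    (var x : Term σ V).subtermAt (i :: π) = none := rfl

@[simp]
theorem subtermAt_fn_cons (f : σ) (ts : List (Term σ V)) (i : ℕ) (π : List ℕ) :
    (fn f ts).subtermAt (i :: π) = ts[i]?.bind (·.subtermAt π) := by
  simp only [subtermAt]
  cases ts[i]? <;> rfl

theorem subtermAt_fn_cons_eq_some_iff {f : σ} {ts : List (Term σ V)} {i : ℕ} {π : List ℕ}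
    {u : Term σ V} :
    (fn f ts).subtermAt (i :: π) = some u ↔ ∃ v, ts[i]? = some v ∧ v.subtermAt π = some u := by
  simp [Option.bind_eq_some_iff]

theorem replaceAt_fn_cons (f : σ) (ts : List (Term σ V)) (i : ℕ) (π : List ℕ)
    (s : Term σ V) :
    (fn f ts).replaceAt (i :: π) s =
      ts[i]?.bind fun u => (u.replaceAt π s).map fun u' => fn f (ts.set i u') := by
  simp only [replaceAt]
  cases ts[i]? with
  | none => rfl
  | some u => cases h : u.replaceAt π s <;> simp [h]

theorem subtermAt_append (t : Term σ V) (p q : List ℕ) :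
    t.subtermAt (p ++ q) = (t.subtermAt p).bind (·.subtermAt q) := by
  induction p generalizing t with
  | nil => simp
  | cons i p ih =>
    cases t with
    | var x => rfl
    | fn f ts => cases h : ts[i]? <;> simp [h, ih]

theorem size_le_sizeList_of_getElem? {ts : List (Term σ V)} {i : ℕ} {v : Term σ V}
    (h : ts[i]? = some v) : v.size ≤ sizeList ts := by
  induction ts generalizing i with
  | nil => simp at h
  | cons w ws ih =>
    cases i with
    | zero => simp_all [sizeList]
    | succ i => have := ih (i := i) (by simpa using h); simp only [sizeList]; omega

theorem length_add_size_le_of_subtermAt {t u : Term σ V} {p : List ℕ}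
    (h : t.subtermAt p = some u) : p.length + u.size ≤ t.size := by
  induction p generalizing t with
  | nil => simp_all
  | cons i p ih =>
    cases t with
    | var x => simp at h
    | fn f ts =>
      obtain ⟨v, hv, hu⟩ := subtermAt_fn_cons_eq_some_iff.mp h
      have := ih hu
      have := size_le_sizeList_of_getElem? hv
      simp only [size, List.length_cons]
      omega

theorem subtermAt_subst {θ : V → Term σ V} {t u : Term σ V} {p : List ℕ}
    (h : t.subtermAt p = some u) : (subst θ t).subtermAt p = some (subst θ u) := by
  induction p generalizing t with
  | nil => simp_all
  | cons i p ih =>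
    cases t with
    | var x => simp at h
    | fn f ts =>
      obtain ⟨v, hv, hu⟩ := subtermAt_fn_cons_eq_some_iff.mp h
      simp [subst, substList_eq_map, hv, ih hu]

theorem subtermAt_subst_cases {θ : V → Term σ V} {t w : Term σ V} {p : List ℕ}
    (h : (subst θ t).subtermAt p = some w) :
    (∃ u, t.subtermAt p = some u ∧ ¬ u.isVar ∧ w = subst θ u) ∨
    ∃ p₁ p₂ x, p = p₁ ++ p₂ ∧ t.subtermAt p₁ = some (var x) ∧
      (θ x).subtermAt p₂ = some w := by
  induction p generalizing t with
  | nil =>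
    cases t with
    | var x => exact .inr ⟨[], [], x, rfl, rfl, h⟩
    | fn f ts => exact .inl ⟨fn f ts, rfl, by simp [isVar], by simpa using h.symm⟩
  | cons i p ih =>
    cases t with
    | var x => exact .inr ⟨[], i :: p, x, rfl, rfl, h⟩
    | fn f ts =>
      simp only [subst, substList_eq_map, subtermAt_fn_cons, List.getElem?_map,
        Option.bind_map, Option.bind_eq_some_iff] at h
      obtain ⟨v, hv, hw⟩ := h
      rcases ih hw with ⟨u, hu, hvar, rfl⟩ | ⟨p₁, p₂, x, rfl, hx, hθ⟩
      · exact .inl ⟨u, by simp [hv, hu], hvar, rfl⟩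
      · exact .inr ⟨i :: p₁, p₂, x, rfl, by simp [hv, hx], hθ⟩

theorem varIn_iff_exists_subtermAt {t : Term σ V} {x : V} :
    VarIn x t ↔ ∃ p, t.subtermAt p = some (var x) := by
  constructor
  · intro h
    induction h with
    | var => exact ⟨[], rfl⟩
    | fn hmem _ ih =>
      obtain ⟨p, hp⟩ := ih
      obtain ⟨i, hi⟩ := List.mem_iff_getElem?.mp hmem
      exact ⟨i :: p, by simp [hi, hp]⟩
  · rintro ⟨p, hp⟩
    induction p generalizing t with
    | nil => simp only [subtermAt_nil, Option.some.injEq] at hp; exact hp ▸ .var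
    | cons i p ih =>
      cases t with
      | var y => simp at hp
      | fn f ts =>
        obtain ⟨v, hv, hx⟩ := subtermAt_fn_cons_eq_some_iff.mp hp
        exact .fn (List.mem_of_getElem? hv) (ih hx)

theorem subtermAt_replaceAt_self {t t' s : Term σ V} {p : List ℕ}
    (h : t.replaceAt p s = some t') : t'.subtermAt p = some s := by
  induction p generalizing t t' with
  | nil => simp_all [replaceAt]
  | cons i p ih =>
    cases t with
    | var x => simp [replaceAt] at h
    | fn f ts =>
      simp only [replaceAt_fn_cons, Option.bind_eq_some_iff, Option.map_eq_some_iff] at h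
      obtain ⟨u, hu, u', hu', rfl⟩ := h
      have hi : i < ts.length := (List.getElem?_eq_some_iff.mp hu).1
      simp [List.getElem?_set_self hi, ih hu']

theorem subtermAt_replaceAt_of_not_prefix {t t' s : Term σ V} {p ρ : List ℕ}
    (hpρ : ¬ p <+: ρ) (hρp : ¬ ρ <+: p) (h : t.replaceAt p s = some t') :
    t'.subtermAt ρ = t.subtermAt ρ := by
  induction p generalizing t t' ρ with
  | nil => exact absurd List.nil_prefix hpρ
  | cons i p ih =>
    cases ρ with
    | nil => exact absurd List.nil_prefix hρp
    | cons j ρ =>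
      cases t with
      | var x => simp [replaceAt] at h
      | fn f ts =>
        simp only [replaceAt_fn_cons, Option.bind_eq_some_iff, Option.map_eq_some_iff] at h
        obtain ⟨u, hu, u', hu', rfl⟩ := h
        by_cases hij : i = j
        · subst hij
          have hi : i < ts.length := (List.getElem?_eq_some_iff.mp hu).1
          simp only [List.cons_prefix_cons, true_and] at hpρ hρp
          simp [List.getElem?_set_self hi, hu, ih hpρ hρp hu']
        · simp [List.getElem?_set_ne hij]

end Term

theorem posGT_iff {τ π : List ℕ} : PosGT τ π ↔ π <+: τ ∧ π.length < τ.length := by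
  constructor
  · rintro ⟨s, hs, rfl⟩
    exact ⟨List.prefix_append π s, by simp [List.length_pos_iff.mpr hs]⟩
  · rintro ⟨⟨s, rfl⟩, hlen⟩
    exact ⟨s, by rintro rfl; simp at hlen, rfl⟩

theorem posGT_take {π : List ℕ} {k : ℕ} (hk : k < π.length) : PosGT π (π.take k) :=
  posGT_iff.mpr ⟨List.take_prefix k π, by simpa using hk⟩

theorem isChain_prefix_of_subset_union_append {α : Type*} {π : List α} {C S : Set (List α)}
    (hC : IsChain (· <+: ·) C) (hS : S ⊆ {p | p <+: π} ∪ (π ++ ·) '' C) :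
    IsChain (· <+: ·) S := by
  intro p hp q hq hpq
  rcases hS hp with hp | ⟨τ₁, hτ₁, rfl⟩ <;> rcases hS hq with hq | ⟨τ₂, hτ₂, rfl⟩
  · exact List.prefix_or_prefix_of_prefix hp hq
  · exact .inl (hp.trans (List.prefix_append π τ₂))
  · exact .inr (hq.trans (List.prefix_append π τ₁))
  · simpa only [List.prefix_append_right_inj] using hC hτ₁ hτ₂ (by rintro rfl; exact hpq rfl)

theorem exists_deepest_posD_extension {R : Set (Rule σ V)} {t : Term σ V} {τ : List ℕ}
    (hτ : τ ∈ PosD R t) :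
    ∃ π ∈ PosD R t, τ <+: π ∧ ∀ ρ ∈ PosD R t, ¬ PosGT ρ π := by
  obtain ⟨π, ⟨hπ, hτπ⟩, hmin⟩ := (measure fun π : List ℕ => t.size - π.length).wf.has_min
    {π | π ∈ PosD R t ∧ τ <+: π} ⟨τ, hτ, List.prefix_refl τ⟩
  refine ⟨π, hπ, hτπ, fun ρ hρ hρπ => hmin ρ ⟨hρ, hτπ.trans (posGT_iff.mp hρπ).1⟩ ?_⟩
  obtain ⟨u, hu, -⟩ := hρ
  have := Term.length_add_size_le_of_subtermAt hu
  have := (posGT_iff.mp hρπ).2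
  have : 1 ≤ u.size := by cases u <;> simp [Term.size]
  show t.size - ρ.length < t.size - π.length
  omega

theorem exists_msdc_cons_of_deepest {R : Set (Rule σ V)} {t : Term σ V} {π : List ℕ}
    (hπ : π ∈ PosD R t) (hdeep : ∀ ρ ∈ PosD R t, ¬ PosGT ρ π) :
    ∃ rest, MSDC R t (π :: rest) := by
  classical
  let rest := ((List.range π.length).reverse.map π.take).filter (· ∈ PosD R t)
  have mem_rest : ∀ {ρ}, ρ ∈ rest ↔ ρ ∈ PosD R t ∧ PosGT π ρ := by
    intro ρ
    simp only [rest, List.mem_filter, List.mem_map, List.mem_reverse, List.mem_range,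
      decide_eq_true_eq, posGT_iff]
    constructor
    · rintro ⟨⟨k, hk, rfl⟩, hρ⟩
      exact ⟨hρ, List.take_prefix k π, by simpa using hk⟩
    · rintro ⟨hρ, hρπ, hlen⟩
      exact ⟨⟨ρ.length, hlen, (List.prefix_iff_eq_take.mp hρπ).symm⟩, hρ⟩
  have pairwise_rest : rest.Pairwise PosGT := by
    refine List.Pairwise.filter _ ?_
    rw [List.pairwise_map, List.pairwise_reverse]
    refine List.pairwise_lt_range.imp_of_mem fun {a b} _ hb hab => ?_
    have hb : b < π.length := List.mem_range.mp hb
    simpa [List.take_take, Nat.min_eq_left hab.le] using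
      posGT_take (π := π.take b) (k := a) (by simp; omega)
  refine ⟨rest, ⟨?_, ?_⟩, .inr ⟨π, rest, rfl, fun ρ hρ => ⟨hdeep ρ hρ, ?_⟩⟩⟩
  · rintro ρ (_ | ⟨_, hρ⟩)
    exacts [hπ, (mem_rest.mp hρ).1]
  · exact List.Pairwise.isChain
      (List.pairwise_cons.mpr ⟨fun ρ hρ => (mem_rest.mp hρ).2, pairwise_rest⟩)
  · exact fun hπρ => mem_rest.mpr ⟨hρ, hπρ⟩

theorem isChain_posD_of_existsUnique_msdc {R : Set (Rule σ V)} {t : Term σ V}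
    (h : ∃! c, MSDC R t c) : IsChain (· <+: ·) (PosD R t) := by
  intro τ₁ h₁ τ₂ h₂ _
  obtain ⟨π₁, hπ₁, hτπ₁, hdeep₁⟩ := exists_deepest_posD_extension h₁
  obtain ⟨π₂, hπ₂, hτπ₂, hdeep₂⟩ := exists_deepest_posD_extension h₂
  obtain ⟨rest₁, hc₁⟩ := exists_msdc_cons_of_deepest hπ₁ hdeep₁
  obtain ⟨rest₂, hc₂⟩ := exists_msdc_cons_of_deepest hπ₂ hdeep₂
  obtain ⟨rfl, -⟩ := List.cons_eq_cons.mp (h.unique hc₁ hc₂)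
  exact List.prefix_or_prefix_of_prefix hτπ₁ hτπ₂

theorem IsRedex.hasDefinedRoot {R : Set (Rule σ V)} (hlhs : ∀ ρ ∈ R, ¬ ρ.lhs.isVar)
    {u : Term σ V} (h : IsRedex R u) : HasDefinedRoot R u := by
  obtain ⟨ρ, hρ, θ, rfl⟩ := h
  cases hl : ρ.lhs with
  | var x => exact absurd ⟨x, hl⟩ (hlhs ρ hρ)
  | fn f ts => exact ⟨f, _, rfl, ρ, hρ, ts, hl⟩

theorem hasDefinedRoot_of_subst {R : Set (Rule σ V)} {θ : V → Term σ V} {u : Term σ V}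
    (hu : ¬ u.isVar) (h : HasDefinedRoot R (Term.subst θ u)) : HasDefinedRoot R u := by
  cases u with
  | var x => exact absurd ⟨x, rfl⟩ hu
  | fn f ts =>
    obtain ⟨g, us, hg, hdef⟩ := h
    obtain ⟨rfl, -⟩ := Term.fn.inj hg
    exact ⟨f, ts, rfl, hdef⟩

theorem ConsTerm.not_hasDefinedRoot_of_subtermAt {R : Set (Rule σ V)} {c u : Term σ V}
    {p : List ℕ} (hc : ConsTerm R c) (h : c.subtermAt p = some u) : ¬ HasDefinedRoot R u := by
  induction p generalizing c with
  | nil =>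
    rintro ⟨f, ts, rfl, hdef⟩
    obtain rfl : c = .fn f ts := by simpa using h
    cases hc with
    | fn _ _ hf _ => exact hf hdef
  | cons i p ih =>
    cases hc with
    | var x => simp at h
    | fn f ts _ hts =>
      obtain ⟨v, hv, hu⟩ := Term.subtermAt_fn_cons_eq_some_iff.mp h
      exact ih (hts v (List.mem_of_getElem? hv)) hu

theorem IsInnermostRedex.not_isRedex_of_varIn {R : Set (Rule σ V)} {θ : V → Term σ V}
    {ℓ u : Term σ V} {x : V} {p : List ℕ} (hinn : IsInnermostRedex R (Term.subst θ ℓ))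
    (hℓ : ¬ ℓ.isVar) (hx : Term.VarIn x ℓ) (hu : (θ x).subtermAt p = some u) :
    ¬ IsRedex R u := by
  obtain ⟨q, hq⟩ := Term.varIn_iff_exists_subtermAt.mp hx
  have hq_ne : q ≠ [] := by
    rintro rfl
    exact hℓ ⟨x, by simpa using hq⟩
  refine hinn.2 (q ++ p) (by simp [hq_ne]) u ?_
  rw [Term.subtermAt_append, Term.subtermAt_subst hq]
  exact hu

theorem mem_posD_of_isRedex_subtermAt_rhs {R : Set (Rule σ V)}
    (hlhs : ∀ ρ ∈ R, ¬ ρ.lhs.isVar)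
    (hvars : ∀ ρ ∈ R, ∀ x : V, Term.VarIn x ρ.rhs → Term.VarIn x ρ.lhs)
    {ρ : Rule σ V} (hρ : ρ ∈ R) {θ : V → Term σ V} {τ : List ℕ} {u : Term σ V}
    (hinn : IsInnermostRedex R (Term.subst θ ρ.lhs))
    (hτ : (Term.subst θ ρ.rhs).subtermAt τ = some u) (hu : IsRedex R u) :
    τ ∈ PosD R ρ.rhs := by
  rcases Term.subtermAt_subst_cases hτ with ⟨v, hv, hv_var, rfl⟩ | ⟨p₁, p₂, x, -, hx, hθx⟩
  · exact ⟨v, hv, hasDefinedRoot_of_subst hv_var (hu.hasDefinedRoot hlhs)⟩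
  · have hxℓ := hvars ρ hρ x (Term.varIn_iff_exists_subtermAt.mpr ⟨p₁, hx⟩)
    exact absurd hu (hinn.not_isRedex_of_varIn (hlhs ρ hρ) hxℓ hθx)

def redexPositions (R : Set (Rule σ V)) (t : Term σ V) : Set (List ℕ) :=
  {p | ∃ u, t.subtermAt p = some u ∧ IsRedex R u}

theorem isChain_redexPositions_of_basicTerm {R : Set (Rule σ V)}
    (hlhs : ∀ ρ ∈ R, ¬ ρ.lhs.isVar) {t : Term σ V} (ht : BasicTerm R t) :
    IsChain (· <+: ·) (redexPositions R t) := by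
  obtain ⟨f, ts, rfl, -, hts⟩ := ht
  refine Set.Subsingleton.isChain ((Set.subsingleton_singleton (a := [])).anti ?_)
  rintro p ⟨u, hu, hred⟩
  cases p with
  | nil => rfl
  | cons i p =>
    obtain ⟨v, hv, hu⟩ := Term.subtermAt_fn_cons_eq_some_iff.mp hu
    exact absurd (hred.hasDefinedRoot hlhs)
      ((hts v (List.mem_of_getElem? hv)).not_hasDefinedRoot_of_subtermAt hu)

theorem redexPositions_subset_of_replaceAt {R : Set (Rule σ V)}
    (hlhs : ∀ ρ ∈ R, ¬ ρ.lhs.isVar)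
    (hvars : ∀ ρ ∈ R, ∀ x : V, Term.VarIn x ρ.rhs → Term.VarIn x ρ.lhs)
    {t t' : Term σ V} (hchain : IsChain (· <+: ·) (redexPositions R t))
    {π : List ℕ} {ρ : Rule σ V} (hρ : ρ ∈ R) {θ : V → Term σ V}
    (hsub : t.subtermAt π = some (Term.subst θ ρ.lhs))
    (hinn : IsInnermostRedex R (Term.subst θ ρ.lhs))
    (hrep : t.replaceAt π (Term.subst θ ρ.rhs) = some t') :
    redexPositions R t' ⊆ {p | p <+: π} ∪ (π ++ ·) '' PosD R ρ.rhs := by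
  rintro p ⟨u, hu, hred⟩
  by_cases hpπ : p <+: π
  · exact .inl hpπ
  by_cases hπp : π <+: p
  · obtain ⟨τ, rfl⟩ := hπp
    rw [Term.subtermAt_append, Term.subtermAt_replaceAt_self hrep] at hu
    exact .inr ⟨τ, mem_posD_of_isRedex_subtermAt_rhs hlhs hvars hρ hinn hu hred, rfl⟩
  · have hp : p ∈ redexPositions R t :=
      ⟨u, Term.subtermAt_replaceAt_of_not_prefix hπp hpπ hrep ▸ hu, hred⟩
    have hπ : π ∈ redexPositions R t := ⟨_, hsub, ρ, hρ, θ, rfl⟩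
    rcases hchain hp hπ (by rintro rfl; exact hpπ (List.prefix_refl p)) with h | h
    exacts [absurd h hpπ, absurd h hπp]

section Invariant

variable {R : Set (Rule σ V)} (hlhs : ∀ ρ ∈ R, ¬ ρ.lhs.isVar)
  (hvars : ∀ ρ ∈ R, ∀ x : V, Term.VarIn x ρ.rhs → Term.VarIn x ρ.lhs)
  (hPosD : ∀ ρ ∈ R, IsChain (· <+: ·) (PosD R ρ.rhs))
include hlhs hvars hPosD

theorem isChain_redexPositions_of_innermostRewrite {t t' : Term σ V}
    (h : IsChain (· <+: ·) (redexPositions R t)) (hstep : InnermostRewrite R t t') :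
    IsChain (· <+: ·) (redexPositions R t') := by
  obtain ⟨π, ρ, hρ, θ, hsub, hinn, hrep⟩ := hstep
  exact isChain_prefix_of_subset_union_append (hPosD ρ hρ)
    (redexPositions_subset_of_replaceAt hlhs hvars h hρ hsub hinn hrep)

theorem isChain_redexPositions_of_transGen {t t' : Term σ V}
    (h : IsChain (· <+: ·) (redexPositions R t))
    (hsteps : Relation.TransGen (InnermostRewrite R) t t') :
    IsChain (· <+: ·) (redexPositions R t') := by
  induction hsteps with
  | single hstep => exact isChain_redexPositions_of_innermostRewrite hlhs hvars hPosD h hstep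
  | tail _ hstep ih =>
    exact isChain_redexPositions_of_innermostRewrite hlhs hvars hPosD ih hstep

end Invariant

theorem ParInnermost.transGen {R : Set (Rule σ V)} {s t : Term σ V}
    (h : ParInnermost R s t) : Relation.TransGen (InnermostRewrite R) s t := by
  cases h with
  | redex h _ _ => exact h
  | congr _ _ _ h _ _ => exact h

theorem eq_of_prefix_of_isInnermostRedex {R : Set (Rule σ V)} {t u₁ u₂ : Term σ V}
    {π₁ π₂ : List ℕ} (h₁ : t.subtermAt π₁ = some u₁) (hi₁ : IsInnermostRedex R u₁)
    (h₂ : t.subtermAt π₂ = some u₂) (hr₂ : IsRedex R u₂) (hpre : π₁ <+: π₂) : π₁ = π₂ := by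
  obtain ⟨s, rfl⟩ := hpre
  rw [Term.subtermAt_append, h₁] at h₂
  by_contra hs
  exact hi₁.2 s (by simpa using hs) u₂ h₂ hr₂

theorem eq_of_isInnermostRedex_of_isChain_redexPositions {R : Set (Rule σ V)}
    {t u₁ u₂ : Term σ V} {π₁ π₂ : List ℕ} (h : IsChain (· <+: ·) (redexPositions R t))
    (h₁ : t.subtermAt π₁ = some u₁) (hi₁ : IsInnermostRedex R u₁)
    (h₂ : t.subtermAt π₂ = some u₂) (hi₂ : IsInnermostRedex R u₂) : π₁ = π₂ := by
  by_contra hne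
  rcases h ⟨u₁, h₁, hi₁.1⟩ ⟨u₂, h₂, hi₂.1⟩ hne with hpre | hpre
  · exact hne (eq_of_prefix_of_isInnermostRedex h₁ hi₁ h₂ hi₂.1 hpre)
  · exact hne (eq_of_prefix_of_isInnermostRedex h₂ hi₂ h₁ hi₁.1 hpre).symm

/-- If `|MSDC(r)| = 1` for every rule of `R`, then in every
parallel-innermost rewrite sequence starting from a basic term, every term of
the sequence contains at most one innermost redex. -/
theorem at_most_one_innermost_redex_of_unique_msdc
    {σ V : Type} [Finite σ] (R : Set (Rule σ V)) (hR : IsWfTRS R)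
    (hOne : ∀ ρ ∈ R, ∃! c : List (List ℕ), MSDC R ρ.rhs c)
    (t : ℕ → Term σ V) (N : ℕ) (hbasic : BasicTerm R (t 0))
    (hsteps : ∀ i < N, ParInnermost R (t i) (t (i + 1))) :
    ∀ i ≤ N, ∀ (π₁ π₂ : List ℕ) (u₁ u₂ : Term σ V),
      (t i).subtermAt π₁ = some u₁ → IsInnermostRedex R u₁ →
      (t i).subtermAt π₂ = some u₂ → IsInnermostRedex R u₂ → π₁ = π₂ := by
  obtain ⟨-, hlhs, hvars⟩ := hR
  have hPosD : ∀ ρ ∈ R, IsChain (· <+: ·) (PosD R ρ.rhs) := fun ρ hρ =>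
    isChain_posD_of_existsUnique_msdc (hOne ρ hρ)
  have hchain : ∀ i ≤ N, IsChain (· <+: ·) (redexPositions R (t i)) := by
    intro i
    induction i with
    | zero => exact fun _ => isChain_redexPositions_of_basicTerm hlhs hbasic
    | succ i ih =>
      exact fun hi => isChain_redexPositions_of_transGen hlhs hvars hPosD (ih (by omega))
        (hsteps i (by omega)).transGen
  intro i hi π₁ π₂ u₁ u₂ h₁ hi₁ h₂ hi₂
  exact eq_of_isInnermostRedex_of_isChain_redexPositions (hchain i hi) h₁ hi₁ h₂ hi₂

end ParallelComplexity
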